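/- arXiv:0707.2135 — 2 statements merged into one kernel-verified Lean document; each statement's English description precedes it below -/
import Mathlib

section
/- If w(ν_k,φ_k) = w(A_k) is a constant on each innermost-layer element Ω̂_{i,1}^k for 1 ≤ i ≤ I_k, then Σ_{i=1}^{I_k} ∫_{Ω̂_{i,1}^k} |L_{i,1}^k w(ν_k,φ_k)|² e^{−2λ_k ν_k} dν_k dφ_k ≤ ε_M |w(A_k)|², where ε_M → 0 exponentially in M (i.e. ε_M ≤ C e^{−bM} for constants C, b > 0). -/
noncomputable section
open MeasureTheory Real Set

/-! ### Generic analytic preliminaries -/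

abbrev E2 : Type := EuclideanSpace ℝ (Fin 2)

/-- The point of the Euclidean plane with coordinates `(x, y)`. -/
def ept (x y : ℝ) : E2 := (WithLp.equiv 2 (Fin 2 → ℝ)).symm ![x, y]

/-- Partial derivative of `f : E2 → ℝ` in the `i`-th coordinate direction. -/
def pd (i : Fin 2) (f : E2 → ℝ) (x : E2) : ℝ := fderiv ℝ f x (EuclideanSpace.single i 1)

/-- Partial derivative in the first variable of a function of two real variables. -/
def dNu (g : ℝ → ℝ → ℝ) : ℝ → ℝ → ℝ := fun x y => deriv (fun t => g t y) x
/-- Partial derivative in the second variable of a function of two real variables. -/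
def dPhi (g : ℝ → ℝ → ℝ) : ℝ → ℝ → ℝ := fun x y => deriv (fun t => g x t) y
/-- Mixed partial derivative `D_x^m D_y^n g`. -/
def mp (g : ℝ → ℝ → ℝ) (m n : ℕ) : ℝ → ℝ → ℝ := dNu^[m] (dPhi^[n] g)

/-- The pairs of derivative orders `(ε₁, ε₂)` with `ε₁ + ε₂ ≤ m`. -/
def degPairs (m : ℕ) : Finset (ℕ × ℕ) :=
  (Finset.range (m+1) ×ˢ Finset.range (m+1)).filter fun q => q.1 + q.2 ≤ m

/-- Squared `L²` norm on the rectangle `(a,b) × (c,d)`. -/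
def L2sqRect (a b c d : ℝ) (w : ℝ → ℝ → ℝ) : ℝ :=
  ∫ x in a..b, ∫ y in c..d, (w x y)^2

/-- Squared `H²` norm on the rectangle `(a,b) × (c,d)`. -/
def H2sqRect (a b c d : ℝ) (w : ℝ → ℝ → ℝ) : ℝ :=
  ∑ q ∈ degPairs 2, L2sqRect a b c d (mp w q.1 q.2)

/-- Squared `L²` norm on the interval `(a,b)`. -/
def L2sqI (a b : ℝ) (v : ℝ → ℝ) : ℝ := ∫ t in a..b, (v t)^2

/-- Squared (Gagliardo) `H^{1/2}` norm on the interval `(a,b)`. -/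
def H12sqI (a b : ℝ) (v : ℝ → ℝ) : ℝ :=
  (∫ t in a..b, (v t)^2) + ∫ x in a..b, ∫ y in a..b, (v x - v y)^2 / (x - y)^2

/-- `w` is a tensor-product polynomial of degree at most `W` in each variable. -/
def IsTensorPoly (W : ℕ) (w : ℝ → ℝ → ℝ) : Prop :=
  ∃ c : ℕ → ℕ → ℝ, ∀ x y, w x y =
    ∑ i ∈ Finset.range (W+1), ∑ j ∈ Finset.range (W+1), c i j * x^i * y^j

/-- `w` is a `C^∞` function of its two variables jointly. -/
def Smooth2 (w : ℝ → ℝ → ℝ) : Prop := ContDiff ℝ (⊤ : ℕ∞) (fun q : ℝ × ℝ => w q.1 q.2)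

/-- All derivatives of order ≤ 2 of `w` are square integrable on `(a,b) × (c,d)`. -/
def MemH2Rect (a b c d : ℝ) (w : ℝ → ℝ → ℝ) : Prop :=
  ∀ q ∈ degPairs 2, IntegrableOn (fun z : ℝ × ℝ => (mp w q.1 q.2 z.1 z.2)^2)
    (Set.Ioo a b ×ˢ Set.Ioo c d) volume

/-- A second-order differential operator in two variables whose six coefficients are
tensor-product polynomials of degree at most `W`. -/
structure PolyOp (W : ℕ) where
  cA : ℝ → ℝ → ℝ
  cB : ℝ → ℝ → ℝ
  cC : ℝ → ℝ → ℝ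
  cD : ℝ → ℝ → ℝ
  cE : ℝ → ℝ → ℝ
  cF : ℝ → ℝ → ℝ
  hA : IsTensorPoly W cA
  hB : IsTensorPoly W cB
  hC : IsTensorPoly W cC
  hD : IsTensorPoly W cD
  hE : IsTensorPoly W cE
  hF : IsTensorPoly W cF

/-- Application of a `PolyOp`:
`A w_{xx} + 2B w_{xy} + C w_{yy} + D w_x + E w_y + F w`. -/
def PolyOp.app {W : ℕ} (op : PolyOp W) (w : ℝ → ℝ → ℝ) : ℝ → ℝ → ℝ := fun x y =>
  op.cA x y * mp w 2 0 x y + 2 * op.cB x y * mp w 1 1 x y + op.cC x y * mp w 0 2 x y +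
  op.cD x y * mp w 1 0 x y + op.cE x y * mp w 0 1 x y + op.cF x y * w x y

/-- Squared `H¹` norm of a function on a subset of the plane. -/
def H1sqOn (s : Set E2) (f : E2 → ℝ) : ℝ :=
  ∫ x in s, ((f x)^2 + ‖fderiv ℝ f x‖^2)

/-- Squared `H²` norm of a function on a subset of the plane. -/
def H2sqOn (s : Set E2) (f : E2 → ℝ) : ℝ :=
  ∫ x in s, ((f x)^2 + ‖fderiv ℝ f x‖^2 + ‖iteratedFDeriv ℝ 2 f x‖^2)

/-! ### Curvilinear polygons -/

/-- A (curvilinear) polygonal domain `Ω ⊂ ℝ²` with vertices `A 1, …, A p` and the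
weight exponents `β` (with `0 < β k < 1`) of the weighted Sobolev spaces `H^{m,l}_β`. -/
structure CurvPolygon where
  p : ℕ
  hp : 0 < p
  Ω : Set E2
  hopen : IsOpen Ω
  hbdd : Bornology.IsBounded Ω
  A : Fin p → E2
  hA : ∀ k, A k ∈ frontier Ω
  β : Fin p → ℝ
  hβ0 : ∀ k, 0 < β k
  hβ1 : ∀ k, β k < 1

/-- Cyclically next vertex index. -/
def vnext {p : ℕ} (hp : 0 < p) (k : Fin p) : Fin p := ⟨(k.val + 1) % p, Nat.mod_lt _ hp⟩
/-- Cyclically previous vertex index. -/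
def vprev {p : ℕ} (hp : 0 < p) (k : Fin p) : Fin p := ⟨(k.val + (p - 1)) % p, Nat.mod_lt _ hp⟩

namespace CurvPolygon

/-- The weight `Φ_β(x) = ∏ᵢ rᵢ(x)^{βᵢ}`. -/
def Phi (P : CurvPolygon) (x : E2) : ℝ := ∏ i, dist x (P.A i) ^ (P.β i)

/-- The squared weighted Sobolev norm `‖ω‖²_{H^{2,2}_β(Ω)}`:
`‖ω‖²_{H¹(Ω)} + Σ_{|α|=2} ‖Φ_β D^α ω‖²_{L²(Ω)}`. -/
def wNormSq (P : CurvPolygon) (ω : E2 → ℝ) : ℝ :=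
  H1sqOn P.Ω ω + ∫ x in P.Ω, (P.Phi x)^2 * ‖iteratedFDeriv ℝ 2 ω x‖^2

/-- The squared weighted Sobolev norm `‖q‖²_{H^{1,1}_β(Ω)}`. -/
def wNormSq11 (P : CurvPolygon) (q : E2 → ℝ) : ℝ :=
  (∫ x in P.Ω, (q x)^2) + ∫ x in P.Ω, (P.Phi x)^2 * ‖fderiv ℝ q x‖^2

end CurvPolygon

/-- A polygonal domain together with the modified polar coordinates
`(ν_k, φ_k)` in sectoral neighbourhoods of the corners: `r_k = e^{ν_k}` and
`θ_k = [(φ_k - ψ_l^k) f_1^k(e^{ν_k}) - (φ_k - ψ_u^k) f_0^k(e^{ν_k})]/(ψ_u^k - ψ_l^k)`. -/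
structure SectorPolygon extends CurvPolygon where
  ρ : ℝ
  hρ : 0 < ρ
  ψl : Fin p → ℝ
  ψu : Fin p → ℝ
  hψ : ∀ k, ψl k < ψu k
  f0 : Fin p → ℝ → ℝ
  f1 : Fin p → ℝ → ℝ
  hf0 : ∀ k, f0 k 0 = ψl k
  hf1 : ∀ k, f1 k 0 = ψu k
  θmap : Fin p → ℝ → ℝ → ℝ
  hθ : ∀ k ν φ, θmap k ν φ =
    ((φ - ψl k) * f1 k (Real.exp ν) - (φ - ψu k) * f0 k (Real.exp ν)) / (ψu k - ψl k)
  cmap : Fin p → ℝ → ℝ → E2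
  hcmap : ∀ k ν φ, cmap k ν φ =
    A k + Real.exp ν • ept (Real.cos (θmap k ν φ)) (Real.sin (θmap k ν φ))
  honto : ∀ k, (fun q : ℝ × ℝ => cmap k q.1 q.2) ''
      (Set.Iio (Real.log ρ) ×ˢ Set.Ioo (ψl k) (ψu k)) = Ω ∩ Metric.ball (A k) ρ
  hdisj : ∀ k l, k ≠ l → Disjoint (Metric.ball (A k) ρ) (Metric.ball (A l) ρ)

namespace SectorPolygon

/-- `λ_k = 1 - β_k`. -/
def lam (P : SectorPolygon) (k : Fin P.p) : ℝ := 1 - P.β k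

/-- The vertex energy
`Σ_{|α|≤2} ∫_{Ω̂^k} |D^α_{ν,φ}(ω∘cmap - ω(A_k))|² e^{-2λ_k ν} dν dφ`. -/
def sectorEnergy (P : SectorPolygon) (k : Fin P.p) (ω : E2 → ℝ) : ℝ :=
  ∑ q ∈ degPairs 2,
    ∫ φ in P.ψl k..P.ψu k, ∫ ν in Set.Iio (Real.log P.ρ),
      (mp (fun a b => ω (P.cmap k a b) - ω (P.A k)) q.1 q.2 ν φ)^2 *
        Real.exp (-2 * P.lam k * ν)

/-- The equivalent expression
`Σ_k ( |ω(A_k)|² + sector energy at A_k ) + ‖ω‖²_{H²(Ω^{p+1})}`. -/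
def Efun (P : SectorPolygon) (ω : E2 → ℝ) : ℝ :=
  (∑ k, ((ω (P.A k))^2 + P.sectorEnergy k ω)) +
    H2sqOn (P.Ω \ ⋃ k, Metric.ball (P.A k) P.ρ) ω

end SectorPolygon

/-! ### Sector operators on the geometric mesh -/

/-- The transformed elliptic operator `L^k_{i,j}` near a corner, written in the modified
polar coordinates `(ν_k, φ_k)`, together with the geometric-mesh data of the sector:
`L w = A w_{νν} + 2B w_{νφ} + C w_{φφ} + D w_ν + E w_φ + F w`, the coefficients being
analytic on the closed strip and bounded, the zeroth order coefficient decaying like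
`e^{2ν}` (it carries the factor `r_k² = e^{2ν_k}`). -/
structure SectorOp where
  lam : ℝ
  hlam0 : 0 < lam
  hlam1 : lam < 1
  ρ : ℝ
  hρ : 0 < ρ
  μ : ℝ
  hμ0 : 0 < μ
  hμ1 : μ < 1
  Ik : ℕ
  hIk : 0 < Ik
  ψ : ℕ → ℝ
  hψ : ∀ i < Ik, ψ i < ψ (i+1)
  cA : ℝ → ℝ → ℝ
  cB : ℝ → ℝ → ℝ
  cC : ℝ → ℝ → ℝ
  cD : ℝ → ℝ → ℝ
  cE : ℝ → ℝ → ℝ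
  cF : ℝ → ℝ → ℝ
  hanal : ∀ g ∈ ({cA, cB, cC, cD, cE, cF} : Set (ℝ → ℝ → ℝ)),
    AnalyticOnNhd ℝ (fun q : ℝ × ℝ => g q.1 q.2)
      {q : ℝ × ℝ | q.1 ≤ Real.log ρ ∧ q.2 ∈ Set.Icc (ψ 0) (ψ Ik)}
  K : ℝ
  hK : 0 < K
  hbdd : ∀ ν φ, ν ≤ Real.log ρ →
    |cA ν φ| ≤ K ∧ |cB ν φ| ≤ K ∧ |cC ν φ| ≤ K ∧ |cD ν φ| ≤ K ∧ |cE ν φ| ≤ K ∧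
    |cF ν φ| ≤ K * Real.exp (2*ν)

namespace SectorOp

/-- The radius `σ_j = ρ μ^{M+1-j}` of the `j`-th circular mesh line. -/
def σf (S : SectorOp) (M j : ℕ) : ℝ := S.ρ * S.μ ^ (M + 1 - j)

/-- Lower `ν`-endpoint of the `j`-th layer (`2 ≤ j ≤ M`). -/
def νlo (S : SectorOp) (M j : ℕ) : ℝ := Real.log (S.σf M j)

/-- Upper `ν`-endpoint of the `j`-th layer. -/
def νhi (S : SectorOp) (M j : ℕ) : ℝ := Real.log (S.ρ * S.μ ^ (M - j))

/-- The operator `L^k_{i,j}` applied to `w`. -/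
def Lop (S : SectorOp) (w : ℝ → ℝ → ℝ) : ℝ → ℝ → ℝ := fun ν φ =>
  S.cA ν φ * mp w 2 0 ν φ + 2 * S.cB ν φ * mp w 1 1 ν φ + S.cC ν φ * mp w 0 2 ν φ +
  S.cD ν φ * mp w 1 0 ν φ + S.cE ν φ * mp w 0 1 ν φ + S.cF ν φ * w ν φ

/-- `∫_{Ω̂_{i,j}} g² e^{-2λν} dν dφ` over the element `(i,j)`, `j ≥ 2`. -/
def elemResidW (S : SectorOp) (M i j : ℕ) (g : ℝ → ℝ → ℝ) : ℝ :=
  ∫ ν in S.νlo M j..S.νhi M j, ∫ φ in S.ψ i..S.ψ (i+1), (g ν φ)^2 * Real.exp (-2*S.lam*ν)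

/-- `∫_{Ω̂_{i,j}} g² dν dφ` (unweighted) over the element `(i,j)`, `j ≥ 2`. -/
def elemResid0 (S : SectorOp) (M i j : ℕ) (g : ℝ → ℝ → ℝ) : ℝ :=
  ∫ ν in S.νlo M j..S.νhi M j, ∫ φ in S.ψ i..S.ψ (i+1), (g ν φ)^2

/-- `∫_{Ω̂_{i,1}} g² e^{-2λν} dν dφ` over the (unbounded) innermost element `(i,1)`. -/
def layer1ResidW (S : SectorOp) (M i : ℕ) (g : ℝ → ℝ → ℝ) : ℝ :=
  ∫ ν in Set.Iio (Real.log (S.ρ * S.μ ^ (M - 1))),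
    ∫ φ in S.ψ i..S.ψ (i+1), (g ν φ)^2 * Real.exp (-2*S.lam*ν)

/-- Squared `H²` norm on the element `(i,j)`, `j ≥ 2`. -/
def elemH2 (S : SectorOp) (M i j : ℕ) (w : ℝ → ℝ → ℝ) : ℝ :=
  H2sqRect (S.νlo M j) (S.νhi M j) (S.ψ i) (S.ψ (i+1)) w

end SectorOp



/-! ### Auxiliary lemmas for the proof -/

lemma dNu_const' (c : ℝ) : dNu (fun _ _ => c) = fun _ _ => 0 := by
  funext x y; simp [dNu]

lemma dPhi_const' (c : ℝ) : dPhi (fun _ _ => c) = fun _ _ => 0 := by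
  funext x y; simp [dPhi]

lemma lop_const (S : SectorOp) (c : ℝ) :
    S.Lop (fun _ _ => c) = fun ν φ => S.cF ν φ * c := by
  funext ν φ
  simp only [SectorOp.Lop, mp, Function.iterate_succ_apply', Function.iterate_zero,
    id_eq, dNu_const', dPhi_const']
  ring

lemma SectorOp.psi_le (S : SectorOp) : ∀ {j i : ℕ}, i ≤ j → j ≤ S.Ik → S.ψ i ≤ S.ψ j := by
  intro j
  induction j with
  | zero => intro i hij _; simp [Nat.le_zero.mp hij]
  | succ n ih =>
    intro i hij hj
    rcases Nat.eq_or_lt_of_le hij with h | h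
    · rw [h]
    · exact le_trans (ih (Nat.lt_succ_iff.mp h) (le_trans (Nat.le_succ n) hj))
        (le_of_lt (S.hψ n (by omega)))


/-- **Estimate (3.7b).** If `w = w(A_k)` is constant on the innermost-layer elements
`Ω̂_{i,1}^k`, `1 ≤ i ≤ I_k`, then
`Σ_i ∫_{Ω̂_{i,1}^k} |L_{i,1}^k w|² e^{-2λ_k ν} dν dφ ≤ ε_M |w(A_k)|²` with
`ε_M ≤ C e^{-bM}` exponentially small in `M`. -/
theorem innermost_layer_estimate (S : SectorOp) :
    ∃ C b : ℝ, 0 < C ∧ 0 < b ∧ ∀ M : ℕ, 2 ≤ M → ∀ wA : ℝ,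
      (∑ i ∈ Finset.range S.Ik, S.layer1ResidW M i (S.Lop fun _ _ => wA))
        ≤ C * Real.exp (-b * M) * wA^2 := by
  classical
  set a : ℝ := 4 - 2 * S.lam with ha
  have ha2 : 2 < a := by have := S.hlam1; simp only [ha]; linarith
  have ha0 : 0 < a := by linarith
  have hlogμ : Real.log S.μ < 0 := Real.log_neg S.hμ0 S.hμ1
  have hψ0Ik : S.ψ 0 < S.ψ S.Ik :=
    lt_of_lt_of_le (S.hψ 0 S.hIk) (S.psi_le S.hIk le_rfl)
  refine ⟨(S.ψ S.Ik - S.ψ 0) * S.K ^ 2 * Real.exp (a * Real.log S.ρ - a * Real.log S.μ),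
    -(a * Real.log S.μ), ?_, ?_, ?_⟩
  · exact mul_pos (mul_pos (sub_pos.2 hψ0Ik) (pow_pos S.hK 2)) (Real.exp_pos _)
  · have : a * Real.log S.μ < 0 := mul_neg_of_pos_of_neg ha0 hlogμ
    linarith
  intro M hM wA
  set T : ℝ := Real.log (S.ρ * S.μ ^ (M - 1)) with hTdef
  have hμpow : (0:ℝ) < S.μ ^ (M - 1) := pow_pos S.hμ0 _
  have hTρ : T ≤ Real.log S.ρ := by
    apply Real.log_le_log (mul_pos S.hρ hμpow)
    have h1 : S.μ ^ (M - 1) ≤ 1 := pow_le_one₀ S.hμ0.le S.hμ1.le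
    nlinarith [S.hρ]
  have hT : T = Real.log S.ρ + (M - 1 : ℕ) * Real.log S.μ := by
    rw [hTdef, Real.log_mul S.hρ.ne' hμpow.ne', Real.log_pow]
  have key : ∀ i ∈ Finset.range S.Ik,
      S.layer1ResidW M i (S.Lop fun _ _ => wA)
        ≤ (S.ψ (i + 1) - S.ψ i) * (S.K ^ 2 * wA ^ 2 * Real.exp (a * T)) := by
    intro i hi
    rw [Finset.mem_range] at hi
    have hψi : S.ψ i ≤ S.ψ (i + 1) := (S.hψ i hi).le
    have hL : S.Lop (fun _ _ => wA) = fun ν φ => S.cF ν φ * wA := lop_const S wA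
    simp only [SectorOp.layer1ResidW, hL, ← hTdef]
    set D : ℝ := (S.ψ (i + 1) - S.ψ i) * (S.K ^ 2 * wA ^ 2 * Real.exp ((a - 1) * T)) with hD
    have hnn : ∀ ν : ℝ,
        0 ≤ ∫ φ in S.ψ i..S.ψ (i + 1), (S.cF ν φ * wA) ^ 2 * Real.exp (-2 * S.lam * ν) :=
      fun ν => intervalIntegral.integral_nonneg hψi (fun φ _ => by positivity)
    have hbound : ∀ ν ∈ Set.Iio T,
        (∫ φ in S.ψ i..S.ψ (i + 1), (S.cF ν φ * wA) ^ 2 * Real.exp (-2 * S.lam * ν))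
          ≤ D * Real.exp ν := by
      intro ν hν
      have hνρ : ν ≤ Real.log S.ρ := le_trans (le_of_lt (Set.mem_Iio.mp hν)) hTρ
      have hcf : ContinuousOn (fun φ => S.cF ν φ) (Set.Icc (S.ψ i) (S.ψ (i + 1))) := by
        intro φ hφ
        have hmem : ((ν, φ) : ℝ × ℝ) ∈
            {q : ℝ × ℝ | q.1 ≤ Real.log S.ρ ∧ q.2 ∈ Set.Icc (S.ψ 0) (S.ψ S.Ik)} := by
          refine ⟨hνρ, ⟨le_trans (S.psi_le (Nat.zero_le i) hi.le) hφ.1,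
            le_trans hφ.2 (S.psi_le hi le_rfl)⟩⟩
        have hA := (S.hanal S.cF (by simp)) _ hmem
        exact (hA.continuousAt.comp
          ((continuous_const.prodMk continuous_id).continuousAt)).continuousWithinAt
      have hcont : ContinuousOn
          (fun φ => (S.cF ν φ * wA) ^ 2 * Real.exp (-2 * S.lam * ν))
          (Set.uIcc (S.ψ i) (S.ψ (i + 1))) := by
        rw [Set.uIcc_of_le hψi]
        exact ((hcf.mul continuousOn_const).pow 2).mul continuousOn_const
      have hfi : IntervalIntegrable
          (fun φ => (S.cF ν φ * wA) ^ 2 * Real.exp (-2 * S.lam * ν))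
          volume (S.ψ i) (S.ψ (i + 1)) := hcont.intervalIntegrable
      have hpt : ∀ φ ∈ Set.Icc (S.ψ i) (S.ψ (i + 1)),
          (S.cF ν φ * wA) ^ 2 * Real.exp (-2 * S.lam * ν)
            ≤ S.K ^ 2 * wA ^ 2 * Real.exp ((a - 1) * T + ν) := by
        intro φ hφ
        have hb := (S.hbdd ν φ hνρ).2.2.2.2.2
        have h1 : (S.cF ν φ) ^ 2 ≤ (S.K * Real.exp (2 * ν)) ^ 2 := by
          rw [← sq_abs]
          exact pow_le_pow_left₀ (abs_nonneg _) hb 2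
        have e2 : Real.exp (2 * ν) ^ 2 * Real.exp (-2 * S.lam * ν) = Real.exp (a * ν) := by
          rw [sq, ← Real.exp_add, ← Real.exp_add]
          congr 1
          simp only [ha]; ring
        have e3 : Real.exp (a * ν) ≤ Real.exp ((a - 1) * T + ν) := by
          apply Real.exp_le_exp.2
          nlinarith [le_of_lt (Set.mem_Iio.mp hν), ha2]
        calc (S.cF ν φ * wA) ^ 2 * Real.exp (-2 * S.lam * ν)
            = (S.cF ν φ) ^ 2 * wA ^ 2 * Real.exp (-2 * S.lam * ν) := by ring
          _ ≤ (S.K * Real.exp (2 * ν)) ^ 2 * wA ^ 2 * Real.exp (-2 * S.lam * ν) := by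
              have h2 : (0:ℝ) ≤ wA ^ 2 * Real.exp (-2 * S.lam * ν) := by positivity
              nlinarith [h1, h2, Real.exp_pos (-2 * S.lam * ν), sq_nonneg wA]
          _ = S.K ^ 2 * wA ^ 2 * (Real.exp (2 * ν) ^ 2 * Real.exp (-2 * S.lam * ν)) := by
              ring
          _ = S.K ^ 2 * wA ^ 2 * Real.exp (a * ν) := by rw [e2]
          _ ≤ S.K ^ 2 * wA ^ 2 * Real.exp ((a - 1) * T + ν) := by
              have := mul_le_mul_of_nonneg_left e3 (by positivity : (0:ℝ) ≤ S.K ^ 2 * wA ^ 2)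
              linarith
      calc (∫ φ in S.ψ i..S.ψ (i + 1), (S.cF ν φ * wA) ^ 2 * Real.exp (-2 * S.lam * ν))
          ≤ ∫ _ in S.ψ i..S.ψ (i + 1), S.K ^ 2 * wA ^ 2 * Real.exp ((a - 1) * T + ν) :=
            intervalIntegral.integral_mono_on hψi hfi intervalIntegrable_const hpt
        _ = (S.ψ (i + 1) - S.ψ i) * (S.K ^ 2 * wA ^ 2 * Real.exp ((a - 1) * T + ν)) := by
            rw [intervalIntegral.integral_const, smul_eq_mul]
        _ = D * Real.exp ν := by rw [hD, Real.exp_add]; ring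
    have hint : IntegrableOn (fun ν => D * Real.exp ν) (Set.Iio T) :=
      ((integrableOn_exp_Iic T).mono_set Iio_subset_Iic_self).const_mul D
    calc (∫ ν in Set.Iio T,
            ∫ φ in S.ψ i..S.ψ (i + 1), (S.cF ν φ * wA) ^ 2 * Real.exp (-2 * S.lam * ν))
        ≤ ∫ ν in Set.Iio T, D * Real.exp ν :=
          integral_mono_of_nonneg (ae_of_all _ hnn) hint
            (ae_restrict_of_forall_mem measurableSet_Iio hbound)
      _ = D * Real.exp T := by
          rw [integral_const_mul, setIntegral_congr_set Iio_ae_eq_Iic, integral_exp_Iic]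
      _ = (S.ψ (i + 1) - S.ψ i) * (S.K ^ 2 * wA ^ 2 * Real.exp (a * T)) := by
          have e : Real.exp ((a - 1) * T) * Real.exp T = Real.exp (a * T) := by
            rw [← Real.exp_add]; congr 1; ring
          calc D * Real.exp T
              = (S.ψ (i + 1) - S.ψ i)
                  * (S.K ^ 2 * wA ^ 2 * (Real.exp ((a - 1) * T) * Real.exp T)) := by
                rw [hD]; ring
            _ = _ := by rw [e]
  calc (∑ i ∈ Finset.range S.Ik, S.layer1ResidW M i (S.Lop fun _ _ => wA))
      ≤ ∑ i ∈ Finset.range S.Ik,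
          (S.ψ (i + 1) - S.ψ i) * (S.K ^ 2 * wA ^ 2 * Real.exp (a * T)) :=
        Finset.sum_le_sum key
    _ = (S.ψ S.Ik - S.ψ 0) * (S.K ^ 2 * wA ^ 2 * Real.exp (a * T)) := by
        rw [← Finset.sum_mul, Finset.sum_range_sub]
    _ = (S.ψ S.Ik - S.ψ 0) * S.K ^ 2 * Real.exp (a * Real.log S.ρ - a * Real.log S.μ)
          * Real.exp (-(-(a * Real.log S.μ)) * M) * wA ^ 2 := by
        have e : Real.exp (a * T)
            = Real.exp (a * Real.log S.ρ - a * Real.log S.μ)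
              * Real.exp (-(-(a * Real.log S.μ)) * M) := by
          rw [← Real.exp_add]
          congr 1
          rw [hT]
          have h1 : ((M - 1 : ℕ) : ℝ) = (M : ℝ) - 1 := by
            push_cast [Nat.cast_sub (by omega : 1 ≤ M)]; ring
          rw [h1]; ring
        rw [e]; ring
end
end

section
/- Let A = [A_II, A_IB; A_IB^T, A_BB] be a real symmetric positive definite matrix in block form and let 𝕊 = A_BB − A_IB^T A_II^{−1} A_IB be its Schur complement. Then for every vector U_B: U_B^T 𝕊 U_B = min over V_I of [V_I; U_B]^T A [V_I; U_B]. Consequently, if there is c > 0 such that this minimum is at least c‖U_B‖² for all U_B, then 𝕊 is symmetric positive definite, invertible, and ‖𝕊^{−1}‖ ≤ 1/c in the matrix norm induced by the Euclidean vector norm. In particular, for the matrix A of the normal equations of the spectral element method, defined by U^T A U = V^{M,W}(u) with U_B the vector of values (h_1,…,h_p) at the vertices of Ω and U_I the remaining degrees of freedom, the stability estimate U_B^T 𝕊 U_B ≥ (C/(ln W)²)‖U_B‖² yields ‖𝕊^{−1}‖ ≤ C′ (ln W)² for W large enough. -/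
/-! Completing the square in the interior block,
`V ⬝ A V = (V_I + A_II⁻¹ A_IB U_B) ⬝ A_II (V_I + A_II⁻¹ A_IB U_B) + U_B ⬝ 𝕊 U_B`,
shows that the minimum over `V_I` is attained at `V_I = -A_II⁻¹ A_IB U_B` and equals
`U_B ⬝ 𝕊 U_B`; since that minimiser is nonzero when `U_B` is, `𝕊` inherits positive
definiteness from `A`. For `y = 𝕊⁻¹ x`, coercivity and Cauchy–Schwarz give
`c ‖y‖² ≤ y ⬝ 𝕊 y = y ⬝ x ≤ ‖y‖ ‖x‖`, hence `‖𝕊⁻¹ x‖ ≤ ‖x‖ / c`. -/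

noncomputable section
open MeasureTheory Real Matrix

/-- The Euclidean norm of a vector. -/
def vecEnorm {n : Type*} [Fintype n] (v : n → ℝ) : ℝ := Real.sqrt (∑ i, (v i)^2)

/-- The Schur complement `𝕊 = A_BB - A_IB^T A_II⁻¹ A_IB`. -/
def schurC {nI nB : ℕ} (AII : Matrix (Fin nI) (Fin nI) ℝ)
    (AIB : Matrix (Fin nI) (Fin nB) ℝ) (ABB : Matrix (Fin nB) (Fin nB) ℝ) :
    Matrix (Fin nB) (Fin nB) ℝ :=
  ABB - AIBᵀ * AII⁻¹ * AIB

namespace Matrix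

section Euclidean

variable {n : Type*} [Fintype n]

theorem vecEnorm_eq_norm (v : n → ℝ) : vecEnorm v = ‖(WithLp.toLp 2 v : EuclideanSpace ℝ n)‖ := by
  simp [vecEnorm, EuclideanSpace.norm_eq]

theorem dotProduct_le_vecEnorm_mul_vecEnorm (v w : n → ℝ) :
    v ⬝ᵥ w ≤ vecEnorm v * vecEnorm w := by
  simpa [vecEnorm_eq_norm, EuclideanSpace.inner_toLp_toLp, dotProduct_comm, mul_comm]
    using real_inner_le_norm (WithLp.toLp 2 v : EuclideanSpace ℝ n) (WithLp.toLp 2 w)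

theorem vecEnorm_inv_mulVec_le [DecidableEq n] {S : Matrix n n ℝ} (hS : IsUnit S.det) {c : ℝ}
    (hc : 0 < c) (hcoer : ∀ v, c * vecEnorm v ^ 2 ≤ v ⬝ᵥ (S *ᵥ v)) (x : n → ℝ) :
    vecEnorm (S⁻¹ *ᵥ x) ≤ 1 / c * vecEnorm x := by
  set y := S⁻¹ *ᵥ x
  have hSy : S *ᵥ y = x := by rw [mulVec_mulVec, mul_nonsing_inv _ hS, one_mulVec]
  have hy : c * vecEnorm y ^ 2 ≤ vecEnorm y * vecEnorm x :=
    (hSy ▸ hcoer y).trans (dotProduct_le_vecEnorm_mul_vecEnorm y x)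
  have hy0 : 0 ≤ vecEnorm y := by rw [vecEnorm_eq_norm]; exact norm_nonneg _
  have hx0 : 0 ≤ vecEnorm x := by rw [vecEnorm_eq_norm]; exact norm_nonneg _
  rw [one_div_mul_eq_div, le_div_iff₀ hc]
  nlinarith

end Euclidean

theorem PosDef.of_fromBlocks₁₁ {R m n : Type*} [Ring R] [PartialOrder R] [StarRing R]
    {A : Matrix m m R} {B : Matrix m n R} {C : Matrix n m R} {D : Matrix n n R}
    (h : (fromBlocks A B C D).PosDef) : A.PosDef := by
  convert h.submatrix Sum.inl_injective
  ext
  simp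

section SchurComplement

variable {m n : Type*} [Fintype m] [DecidableEq m] [Fintype n]
  {A : Matrix m m ℝ} {B : Matrix m n ℝ} {D : Matrix n n ℝ}

theorem dotProduct_fromBlocks_mulVec_eq [Invertible A] (hA : A.IsHermitian) (x : m → ℝ)
    (y : n → ℝ) :
    (x ⊕ᵥ y) ⬝ᵥ (fromBlocks A B Bᵀ D *ᵥ (x ⊕ᵥ y)) =
      (x + (A⁻¹ * B) *ᵥ y) ⬝ᵥ (A *ᵥ (x + (A⁻¹ * B) *ᵥ y)) + y ⬝ᵥ ((D - Bᵀ * A⁻¹ * B) *ᵥ y) := by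
  simpa only [star_trivial, conjTranspose_eq_transpose_of_trivial, ← dotProduct_mulVec]
    using schur_complement_eq₁₁ B D x y hA

theorem isLeast_dotProduct_fromBlocks_mulVec (hA : A.PosDef) (y : n → ℝ) :
    IsLeast {q | ∃ x : m → ℝ, q = (x ⊕ᵥ y) ⬝ᵥ (fromBlocks A B Bᵀ D *ᵥ (x ⊕ᵥ y))}
      (y ⬝ᵥ ((D - Bᵀ * A⁻¹ * B) *ᵥ y)) := by
  have := hA.isUnit.invertible
  refine ⟨⟨-((A⁻¹ * B) *ᵥ y), by simp [dotProduct_fromBlocks_mulVec_eq hA.isHermitian]⟩, ?_⟩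
  rintro q ⟨x, rfl⟩
  rw [dotProduct_fromBlocks_mulVec_eq hA.isHermitian]
  have := hA.posSemidef.dotProduct_mulVec_nonneg (x + (A⁻¹ * B) *ᵥ y)
  rw [star_trivial] at this
  linarith

theorem PosDef.schur_complement₁₁ (h : (fromBlocks A B Bᵀ D).PosDef) :
    (D - Bᵀ * A⁻¹ * B).PosDef := by
  have hA := h.of_fromBlocks₁₁
  have := hA.isUnit.invertible
  refine .of_dotProduct_mulVec_pos ?_ fun y hy => ?_
  · simpa using (IsHermitian.fromBlocks₁₁ B D hA.isHermitian).mp (by simpa using h.isHermitian)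
  · obtain ⟨x, hx⟩ := (isLeast_dotProduct_fromBlocks_mulVec (B := B) (D := D) hA y).1
    have hxy : (x ⊕ᵥ y) ≠ 0 := fun h0 => hy (funext fun i => congrFun h0 (Sum.inr i))
    simpa [hx] using h.dotProduct_mulVec_pos hxy

end SchurComplement

end Matrix

/-- **Schur complement and the common boundary values.**
For a symmetric positive definite block matrix `A = [A_II, A_IB; A_IB^T, A_BB]` with
Schur complement `𝕊`:
(i) `U_B ⬝ 𝕊 U_B` is the minimum of the quadratic form `V ⬝ A V` over all `V` with
boundary block `U_B`;
(ii) if this minimum is bounded below by `c ‖U_B‖²` with `c > 0`, then `𝕊` is symmetric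
positive definite, invertible, and `‖𝕊⁻¹‖ ≤ 1/c` in the norm induced by the Euclidean
vector norm;
(iii) in particular (for the normal equations of the spectral element method, where
`U^T A U = V^{M,W}(u)` and `U_B = (h_1, …, h_p)`), the stability estimate
`U_B ⬝ 𝕊 U_B ≥ (C/(ln W)²) ‖U_B‖²` yields `‖𝕊⁻¹‖ ≤ (ln W)²/C`. -/
theorem schur_complement_bound (nI nB : ℕ)
    (AII : Matrix (Fin nI) (Fin nI) ℝ) (AIB : Matrix (Fin nI) (Fin nB) ℝ)
    (ABB : Matrix (Fin nB) (Fin nB) ℝ)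
    (hpd : (Matrix.fromBlocks AII AIB AIBᵀ ABB).PosDef) :
    (∀ UB : Fin nB → ℝ,
        IsLeast {x : ℝ | ∃ VI : Fin nI → ℝ,
            x = (Sum.elim VI UB) ⬝ᵥ
              ((Matrix.fromBlocks AII AIB AIBᵀ ABB) *ᵥ (Sum.elim VI UB))}
          (UB ⬝ᵥ (schurC AII AIB ABB *ᵥ UB)))
    ∧ (∀ c : ℝ, 0 < c →
        (∀ UB : Fin nB → ℝ, c * (vecEnorm UB)^2 ≤ UB ⬝ᵥ (schurC AII AIB ABB *ᵥ UB)) →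
        (schurC AII AIB ABB).PosDef ∧ IsUnit (schurC AII AIB ABB).det ∧
          ∀ x : Fin nB → ℝ,
            vecEnorm ((schurC AII AIB ABB)⁻¹ *ᵥ x) ≤ (1/c) * vecEnorm x)
    ∧ (∀ Cst Wr : ℝ, 0 < Cst → 1 < Wr →
        (∀ UB : Fin nB → ℝ,
          Cst / (Real.log Wr)^2 * (vecEnorm UB)^2 ≤ UB ⬝ᵥ (schurC AII AIB ABB *ᵥ UB)) →
        ∀ x : Fin nB → ℝ,
          vecEnorm ((schurC AII AIB ABB)⁻¹ *ᵥ x) ≤ (Real.log Wr)^2 / Cst * vecEnorm x) := by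
  have hA := hpd.of_fromBlocks₁₁
  have hS : (schurC AII AIB ABB).PosDef := hpd.schur_complement₁₁
  have hdet : IsUnit (schurC AII AIB ABB).det := hS.det_pos.ne'.isUnit
  refine ⟨isLeast_dotProduct_fromBlocks_mulVec hA,
    fun c hc hcoer => ⟨hS, hdet, vecEnorm_inv_mulVec_le hdet hc hcoer⟩,
    fun Cst Wr hCst hWr hcoer x => ?_⟩
  have hc : 0 < Cst / Real.log Wr ^ 2 := by have := Real.log_pos hWr; positivity
  simpa only [one_div_div] using vecEnorm_inv_mulVec_le hdet hc hcoer x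
end
end
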